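/- (Convergence of policy iteration) In a finite MDP with discount factor γ ∈ [0,1), the policy iteration procedure — starting from any deterministic policy π₀ and repeatedly setting π_{k+1}(s) ∈ argmax_a q_{π_k}(s,a) — produces a sequence of policies with v_{π_{k+1}}(s) ≥ v_{π_k}(s) for all s and k, and reaches an optimal policy after finitely many iterations; in particular, since a finite MDP has only finitely many deterministic policies, there exists k with v_{π_k} = v*. -/

import Mathlib

open Finset

/-- A (stationary stochastic) policy on a finite action set: for each state `s`,
`prob s` is a probability distribution over actions. -/
structure Policy (S A : Type*) [Fintype A] where
  prob : S → A → ℝ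
  nonneg : ∀ s a, 0 ≤ prob s a
  sum_one : ∀ s, ∑ a : A, prob s a = 1

/-- A finite Markov decision process: finite state set `S`, finite action set `A`,
finite reward-label set `R` whose real value is given by `val`, and dynamics
`p s a s' r = p(s', r | s, a)`. -/
structure FinMDP (S A R : Type*) [Fintype S] [Fintype A] [Fintype R] where
  p : S → A → S → R → ℝ
  val : R → ℝ
  p_nonneg : ∀ s a s' r, 0 ≤ p s a s' r
  p_sum_one : ∀ s a, (∑ s' : S, ∑ r : R, p s a s' r) = 1

variable {S A R : Type*} [Fintype S] [Fintype A] [Fintype R]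

/-- `qStep M π k s a` is the expected reward received at time `k+1` when starting
in state `s`, taking action `a`, and thereafter following the policy `π`. -/
noncomputable def qStep (M : FinMDP S A R) (π : Policy S A) : ℕ → S → A → ℝ
  | 0 => fun s a => ∑ s' : S, ∑ r : R, M.p s a s' r * M.val r
  | (k + 1) => fun s a => ∑ s' : S, ∑ r : R, M.p s a s' r *
      ∑ a' : A, π.prob s' a' * qStep M π k s' a'

/-- `vStep M π k s` is the expected reward received at time `k+1` when starting
in state `s` and following the policy `π`. -/
noncomputable def vStep (M : FinMDP S A R) (π : Policy S A) (k : ℕ) (s : S) : ℝ :=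
  ∑ a : A, π.prob s a * qStep M π k s a

/-- The action-value function `q_π(s,a)`: the expected discounted return
`E_π[∑_k γ^k R_{t+k+1} | S_t = s, A_t = a]`. -/
noncomputable def qval (M : FinMDP S A R) (γ : ℝ) (π : Policy S A) (s : S) (a : A) : ℝ :=
  ∑' k : ℕ, γ ^ k * qStep M π k s a

/-- The state-value function `v_π(s)`: the expected discounted return
`E_π[∑_k γ^k R_{t+k+1} | S_t = s]`. -/
noncomputable def vval (M : FinMDP S A R) (γ : ℝ) (π : Policy S A) (s : S) : ℝ :=
  ∑' k : ℕ, γ ^ k * vStep M π k s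

/-- The optimal state-value function `v*(s) = max_π v_π(s)`. -/
noncomputable def vStar (M : FinMDP S A R) (γ : ℝ) (s : S) : ℝ :=
  ⨆ π : Policy S A, vval M γ π s

/-- The optimal action-value function `q*(s,a) = max_π q_π(s,a)`. -/
noncomputable def qStar (M : FinMDP S A R) (γ : ℝ) (s : S) (a : A) : ℝ :=
  ⨆ π : Policy S A, qval M γ π s a

/-- The deterministic policy selecting action `d s` in state `s` (as a point-mass
stochastic policy). -/
noncomputable def detPolicy [DecidableEq A] (d : S → A) : Policy S A where
  prob s a := if a = d s then 1 else 0
  nonneg s a := by by_cases h : a = d s <;> simp [h]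
  sum_one s := by simp

/-! ### Auxiliary development for the proof -/

section Aux

/-- weighted-average bound -/
private lemma avg_abs_le {ι : Type*} [Fintype ι] {w f : ι → ℝ} {C : ℝ}
    (hw : ∀ i, 0 ≤ w i) (hws : ∑ i, w i = 1) (hf : ∀ i, |f i| ≤ C) :
    |∑ i, w i * f i| ≤ C := by
  calc |∑ i, w i * f i| ≤ ∑ i, |w i * f i| := Finset.abs_sum_le_sum_abs _ _
    _ = ∑ i, w i * |f i| := by
        refine Finset.sum_congr rfl fun i _ => ?_
        rw [abs_mul, abs_of_nonneg (hw i)]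
    _ ≤ ∑ i, w i * C := Finset.sum_le_sum fun i _ => mul_le_mul_of_nonneg_left (hf i) (hw i)
    _ = C := by rw [← Finset.sum_mul, hws, one_mul]

/-- expected one-step reward -/
noncomputable def rbar (M : FinMDP S A R) (s : S) (a : A) : ℝ :=
  ∑ s' : S, ∑ r : R, M.p s a s' r * M.val r

/-- marginal transition probabilities -/
noncomputable def Pmar (M : FinMDP S A R) (s : S) (a : A) (s' : S) : ℝ :=
  ∑ r : R, M.p s a s' r

lemma Pmar_nonneg (M : FinMDP S A R) (s : S) (a : A) (s' : S) : 0 ≤ Pmar M s a s' :=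
  Finset.sum_nonneg fun r _ => M.p_nonneg s a s' r

lemma Pmar_sum_one (M : FinMDP S A R) (s : S) (a : A) : ∑ s' : S, Pmar M s a s' = 1 :=
  M.p_sum_one s a

/-- a uniform bound on one-step rewards -/
noncomputable def Cbd (M : FinMDP S A R) : ℝ := ∑ r : R, |M.val r|

lemma abs_val_le_Cbd (M : FinMDP S A R) (r : R) : |M.val r| ≤ Cbd M :=
  Finset.single_le_sum (fun r _ => abs_nonneg (M.val r)) (Finset.mem_univ r)

lemma Cbd_nonneg (M : FinMDP S A R) : 0 ≤ Cbd M :=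
  Finset.sum_nonneg fun r _ => abs_nonneg _

private lemma pavg_abs_le (M : FinMDP S A R) (s : S) (a : A) {f : S → R → ℝ} {C : ℝ}
    (hf : ∀ s' r, |f s' r| ≤ C) :
    |∑ s' : S, ∑ r : R, M.p s a s' r * f s' r| ≤ C := by
  have h : (∑ s' : S, ∑ r : R, M.p s a s' r * f s' r)
      = ∑ x : S × R, M.p s a x.1 x.2 * f x.1 x.2 := by
    rw [Fintype.sum_prod_type]
  rw [h]
  refine avg_abs_le (fun x => M.p_nonneg s a x.1 x.2) ?_ (fun x => hf x.1 x.2)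
  rw [Fintype.sum_prod_type]; exact M.p_sum_one s a

lemma abs_qStep_le (M : FinMDP S A R) (π : Policy S A) :
    ∀ (k : ℕ) (s : S) (a : A), |qStep M π k s a| ≤ Cbd M := by
  intro k
  induction k with
  | zero =>
      intro s a
      exact pavg_abs_le M s a (fun s' r => abs_val_le_Cbd M r)
  | succ k ih =>
      intro s a
      show |∑ s' : S, ∑ r : R, M.p s a s' r * ∑ a' : A, π.prob s' a' * qStep M π k s' a'| ≤ _
      refine pavg_abs_le M s a (fun s' _ => ?_)
      exact avg_abs_le (π.nonneg s') (π.sum_one s') (fun a' => ih s' a')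

lemma abs_vStep_le (M : FinMDP S A R) (π : Policy S A) (k : ℕ) (s : S) :
    |vStep M π k s| ≤ Cbd M :=
  avg_abs_le (π.nonneg s) (π.sum_one s) (fun a => abs_qStep_le M π k s a)

variable {γ : ℝ}

lemma summable_q (M : FinMDP S A R) (π : Policy S A) (hγ0 : 0 ≤ γ) (hγ1 : γ < 1)
    (s : S) (a : A) : Summable (fun k : ℕ => γ ^ k * qStep M π k s a) := by
  refine Summable.of_norm_bounded
    ((summable_geometric_of_lt_one hγ0 hγ1).mul_left (Cbd M)) (fun k => ?_)
  rw [Real.norm_eq_abs, abs_mul, abs_pow, abs_of_nonneg hγ0, mul_comm]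
  exact mul_le_mul_of_nonneg_right (abs_qStep_le M π k s a) (pow_nonneg hγ0 k)

lemma summable_v (M : FinMDP S A R) (π : Policy S A) (hγ0 : 0 ≤ γ) (hγ1 : γ < 1)
    (s : S) : Summable (fun k : ℕ => γ ^ k * vStep M π k s) := by
  refine Summable.of_norm_bounded
    ((summable_geometric_of_lt_one hγ0 hγ1).mul_left (Cbd M)) (fun k => ?_)
  rw [Real.norm_eq_abs, abs_mul, abs_pow, abs_of_nonneg hγ0, mul_comm]
  exact mul_le_mul_of_nonneg_right (abs_vStep_le M π k s) (pow_nonneg hγ0 k)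

lemma qStep_succ (M : FinMDP S A R) (π : Policy S A) (k : ℕ) (s : S) (a : A) :
    qStep M π (k + 1) s a = ∑ s' : S, Pmar M s a s' * vStep M π k s' := by
  show (∑ s' : S, ∑ r : R, M.p s a s' r * ∑ a' : A, π.prob s' a' * qStep M π k s' a') = _
  refine Finset.sum_congr rfl fun s' _ => ?_
  rw [Pmar, Finset.sum_mul, vStep]

/-- Bellman equation for `vval` in terms of `qval`. -/
lemma vval_eq_sum_q (M : FinMDP S A R) (π : Policy S A) (hγ0 : 0 ≤ γ) (hγ1 : γ < 1) (s : S) :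
    vval M γ π s = ∑ a : A, π.prob s a * qval M γ π s a := by
  rw [vval]
  have h1 : ∀ k : ℕ, γ ^ k * vStep M π k s
      = ∑ a : A, π.prob s a * (γ ^ k * qStep M π k s a) := by
    intro k
    rw [vStep, Finset.mul_sum]
    exact Finset.sum_congr rfl fun a _ => by ring
  rw [tsum_congr h1, Summable.tsum_finsetSum (fun a _ => ((summable_q M π hγ0 hγ1 s a).mul_left _))]
  exact Finset.sum_congr rfl fun a _ => by
    rw [qval, ← tsum_mul_left]

/-- Bellman equation for `qval` in terms of `vval`. -/
lemma qval_eq (M : FinMDP S A R) (π : Policy S A) (hγ0 : 0 ≤ γ) (hγ1 : γ < 1) (s : S) (a : A) :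
    qval M γ π s a = rbar M s a + γ * ∑ s' : S, Pmar M s a s' * vval M γ π s' := by
  rw [qval, Summable.tsum_eq_zero_add (summable_q M π hγ0 hγ1 s a)]
  congr 1
  · rw [pow_zero, one_mul]; rfl
  have h1 : ∀ k : ℕ, γ ^ (k + 1) * qStep M π (k + 1) s a
      = ∑ s' : S, Pmar M s a s' * (γ * (γ ^ k * vStep M π k s')) := by
    intro k
    rw [qStep_succ, Finset.mul_sum]
    exact Finset.sum_congr rfl fun s' _ => by ring
  rw [tsum_congr h1,
    Summable.tsum_finsetSum (fun s' _ => (((summable_v M π hγ0 hγ1 s').mul_left γ).mul_left _)),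
    Finset.mul_sum]
  refine Finset.sum_congr rfl fun s' _ => ?_
  rw [tsum_mul_left, tsum_mul_left, vval]
  ring

/-- The Bellman operator of a policy. -/
noncomputable def Bop (M : FinMDP S A R) (γ : ℝ) (π : Policy S A) (v : S → ℝ) (s : S) : ℝ :=
  ∑ a : A, π.prob s a * (rbar M s a + γ * ∑ s' : S, Pmar M s a s' * v s')

lemma Top_vval (M : FinMDP S A R) (π : Policy S A) (hγ0 : 0 ≤ γ) (hγ1 : γ < 1) (s : S) :
    Bop M γ π (vval M γ π) s = vval M γ π s := by
  rw [vval_eq_sum_q M π hγ0 hγ1, Bop]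
  exact Finset.sum_congr rfl fun a _ => by rw [qval_eq M π hγ0 hγ1]

lemma Top_mono (M : FinMDP S A R) (π : Policy S A) (hγ0 : 0 ≤ γ) {v w : S → ℝ}
    (h : ∀ s, v s ≤ w s) (s : S) : Bop M γ π v s ≤ Bop M γ π w s := by
  refine Finset.sum_le_sum fun a _ => mul_le_mul_of_nonneg_left ?_ (π.nonneg s a)
  refine add_le_add_right (mul_le_mul_of_nonneg_left ?_ hγ0) _
  exact Finset.sum_le_sum fun s' _ =>
    mul_le_mul_of_nonneg_left (h s') (Pmar_nonneg M s a s')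

lemma Top_dist (M : FinMDP S A R) (π : Policy S A) (hγ0 : 0 ≤ γ) {v w : S → ℝ} {D : ℝ}
    (h : ∀ s, |v s - w s| ≤ D) (hD : 0 ≤ D) (s : S) :
    |Bop M γ π v s - Bop M γ π w s| ≤ γ * D := by
  have key : Bop M γ π v s - Bop M γ π w s
      = ∑ a : A, π.prob s a * (γ * ∑ s' : S, Pmar M s a s' * (v s' - w s')) := by
    rw [Bop, Bop, ← Finset.sum_sub_distrib]
    refine Finset.sum_congr rfl fun a _ => ?_
    have hsub : (∑ s' : S, Pmar M s a s' * (v s' - w s'))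
        = (∑ s' : S, Pmar M s a s' * v s') - ∑ s' : S, Pmar M s a s' * w s' := by
      rw [← Finset.sum_sub_distrib]
      exact Finset.sum_congr rfl fun s' _ => by ring
    rw [hsub]; ring
  rw [key]
  refine avg_abs_le (π.nonneg s) (π.sum_one s) (fun a => ?_)
  rw [abs_mul, abs_of_nonneg hγ0]
  refine mul_le_mul_of_nonneg_left ?_ hγ0
  exact avg_abs_le (Pmar_nonneg M s a) (Pmar_sum_one M s a) h

private lemma tendsto_aux {D c : ℝ} (hγ0 : 0 ≤ γ) (hγ1 : γ < 1) :
    Filter.Tendsto (fun n : ℕ => c + γ ^ n * D) Filter.atTop (nhds c) := by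
  have h := (tendsto_pow_atTop_nhds_zero_of_lt_one hγ0 hγ1).mul_const D
  have := Filter.Tendsto.const_add c h
  simpa using this

lemma le_vval_of_le_Top (M : FinMDP S A R) (π : Policy S A) (hγ0 : 0 ≤ γ) (hγ1 : γ < 1)
    {v : S → ℝ} (hle : ∀ s, v s ≤ Bop M γ π v s) (s : S) : v s ≤ vval M γ π s := by
  set w := vval M γ π with hw
  set D : ℝ := ∑ t : S, |v t - w t| with hDdef
  have hD : 0 ≤ D := Finset.sum_nonneg fun t _ => abs_nonneg _
  have hDle : ∀ t, |v t - w t| ≤ D := fun t =>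
    Finset.single_le_sum (fun t _ => abs_nonneg (v t - w t)) (Finset.mem_univ t)
  have claimA : ∀ n : ℕ, ∀ t, v t ≤ (Bop M γ π)^[n] v t := by
    intro n
    induction n with
    | zero => intro t; simp
    | succ n ih =>
        intro t
        rw [Function.iterate_succ_apply']
        exact le_trans (hle t) (Top_mono M π hγ0 ih t)
  have claimB : ∀ n : ℕ, ∀ t, |(Bop M γ π)^[n] v t - w t| ≤ γ ^ n * D := by
    intro n
    induction n with
    | zero => intro t; simpa using hDle t
    | succ n ih =>
        intro t
        rw [Function.iterate_succ_apply']
        have hwfix : w t = Bop M γ π w t := (Top_vval M π hγ0 hγ1 t).symm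
        rw [hwfix]
        calc |Bop M γ π ((Bop M γ π)^[n] v) t - Bop M γ π w t| ≤ γ * (γ ^ n * D) :=
              Top_dist M π hγ0 ih (mul_nonneg (pow_nonneg hγ0 n) hD) t
          _ = γ ^ (n + 1) * D := by ring
  refine ge_of_tendsto' (tendsto_aux hγ0 hγ1 (D := D) (c := w s)) (fun n => ?_)
  have h1 := claimA n s
  have h2 := (abs_le.mp (claimB n s)).2
  linarith

lemma vval_le_of_Top_le (M : FinMDP S A R) (π : Policy S A) (hγ0 : 0 ≤ γ) (hγ1 : γ < 1)
    {v : S → ℝ} (hle : ∀ s, Bop M γ π v s ≤ v s) (s : S) : vval M γ π s ≤ v s := by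
  set w := vval M γ π with hw
  set D : ℝ := ∑ t : S, |v t - w t| with hDdef
  have hD : 0 ≤ D := Finset.sum_nonneg fun t _ => abs_nonneg _
  have hDle : ∀ t, |v t - w t| ≤ D := fun t =>
    Finset.single_le_sum (fun t _ => abs_nonneg (v t - w t)) (Finset.mem_univ t)
  have claimA : ∀ n : ℕ, ∀ t, (Bop M γ π)^[n] v t ≤ v t := by
    intro n
    induction n with
    | zero => intro t; simp
    | succ n ih =>
        intro t
        rw [Function.iterate_succ_apply']
        exact le_trans (Top_mono M π hγ0 ih t) (hle t)
  have claimB : ∀ n : ℕ, ∀ t, |(Bop M γ π)^[n] v t - w t| ≤ γ ^ n * D := by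
    intro n
    induction n with
    | zero => intro t; simpa using hDle t
    | succ n ih =>
        intro t
        rw [Function.iterate_succ_apply']
        have hwfix : w t = Bop M γ π w t := (Top_vval M π hγ0 hγ1 t).symm
        rw [hwfix]
        calc |Bop M γ π ((Bop M γ π)^[n] v) t - Bop M γ π w t| ≤ γ * (γ ^ n * D) :=
              Top_dist M π hγ0 ih (mul_nonneg (pow_nonneg hγ0 n) hD) t
          _ = γ ^ (n + 1) * D := by ring
  refine ge_of_tendsto' (tendsto_aux hγ0 hγ1 (D := D) (c := v s)) (fun n => ?_)
  have h1 := claimA n s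
  have h2 := (abs_le.mp (claimB n s)).1
  linarith

section Det

variable [DecidableEq A]

lemma det_vval (M : FinMDP S A R) (d : S → A) (hγ0 : 0 ≤ γ) (hγ1 : γ < 1) (s : S) :
    vval M γ (detPolicy d) s = qval M γ (detPolicy d) s (d s) := by
  rw [vval_eq_sum_q M _ hγ0 hγ1]
  simp [detPolicy]

lemma det_Top (M : FinMDP S A R) (d : S → A) (v : S → ℝ) (s : S) :
    Bop M γ (detPolicy d) v s
      = rbar M s (d s) + γ * ∑ s' : S, Pmar M s (d s) s' * v s' := by
  rw [Bop]
  simp [detPolicy]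

/-- Policy improvement. -/
lemma improve (M : FinMDP S A R) (hγ0 : 0 ≤ γ) (hγ1 : γ < 1) (d0 d1 : S → A)
    (h : ∀ s a, qval M γ (detPolicy d0) s a ≤ qval M γ (detPolicy d0) s (d1 s)) (s : S) :
    vval M γ (detPolicy d0) s ≤ vval M γ (detPolicy d1) s := by
  refine le_vval_of_le_Top M _ hγ0 hγ1 (fun t => ?_) s
  rw [det_Top, ← qval_eq M _ hγ0 hγ1]
  rw [det_vval M d0 hγ0 hγ1]
  exact h t (d0 t)

/-- If one improvement step does not change the value function, the value function is
optimal among all stochastic policies. -/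
lemma optimal_of_stable (M : FinMDP S A R) (hγ0 : 0 ≤ γ) (hγ1 : γ < 1) (d0 d1 : S → A)
    (h : ∀ s a, qval M γ (detPolicy d0) s a ≤ qval M γ (detPolicy d0) s (d1 s))
    (hv : ∀ s, vval M γ (detPolicy d0) s = vval M γ (detPolicy d1) s)
    (π : Policy S A) (s : S) :
    vval M γ π s ≤ vval M γ (detPolicy d0) s := by
  refine vval_le_of_Top_le M π hγ0 hγ1 (fun t => ?_) s
  have step1 : Bop M γ π (vval M γ (detPolicy d0)) t
      ≤ qval M γ (detPolicy d0) t (d1 t) := by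
    rw [Bop]
    have : ∀ a : A, π.prob t a * (rbar M t a
          + γ * ∑ s' : S, Pmar M t a s' * vval M γ (detPolicy d0) s')
        ≤ π.prob t a * qval M γ (detPolicy d0) t (d1 t) := by
      intro a
      rw [← qval_eq M _ hγ0 hγ1]
      exact mul_le_mul_of_nonneg_left (h t a) (π.nonneg t a)
    calc (∑ a : A, π.prob t a * (rbar M t a
          + γ * ∑ s' : S, Pmar M t a s' * vval M γ (detPolicy d0) s'))
        ≤ ∑ a : A, π.prob t a * qval M γ (detPolicy d0) t (d1 t) :=
          Finset.sum_le_sum fun a _ => this a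
      _ = qval M γ (detPolicy d0) t (d1 t) := by
          rw [← Finset.sum_mul, π.sum_one, one_mul]
  have step2 : qval M γ (detPolicy d0) t (d1 t) = vval M γ (detPolicy d0) t := by
    rw [qval_eq M _ hγ0 hγ1]
    have hPv : (∑ s' : S, Pmar M t (d1 t) s' * vval M γ (detPolicy d0) s')
        = ∑ s' : S, Pmar M t (d1 t) s' * vval M γ (detPolicy d1) s' :=
      Finset.sum_congr rfl fun s' _ => by rw [hv s']
    rw [hPv, ← qval_eq M _ hγ0 hγ1, ← det_vval M d1 hγ0 hγ1, ← hv t]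
  exact le_of_le_of_eq step1 step2

end Det

end Aux

/-- Convergence of policy iteration: starting from any deterministic policy `π₀`
and repeatedly choosing `π_{k+1}(s) ∈ argmax_a q_{π_k}(s,a)`, the values improve
monotonically, `v_{π_{k+1}}(s) ≥ v_{π_k}(s)` for all `s` and `k`, and after
finitely many iterations an optimal policy is reached: there exists `k` with
`v_{π_k} = v*`. -/
theorem policy_iteration_converges [Nonempty A] [DecidableEq A]
    (M : FinMDP S A R) (γ : ℝ) (hγ0 : 0 ≤ γ) (hγ1 : γ < 1)
    (πseq : ℕ → S → A)
    (hgreedy : ∀ (k : ℕ) (s : S) (a : A),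
      qval M γ (detPolicy (πseq k)) s a ≤ qval M γ (detPolicy (πseq k)) s (πseq (k + 1) s)) :
    (∀ (k : ℕ) (s : S),
      vval M γ (detPolicy (πseq k)) s ≤ vval M γ (detPolicy (πseq (k + 1))) s) ∧
    (∃ k : ℕ, ∀ s : S, vval M γ (detPolicy (πseq k)) s = vStar M γ s) := by
  classical
  haveI : Nonempty (Policy S A) := ⟨detPolicy (fun _ => Classical.arbitrary A)⟩
  have hmono : ∀ (k : ℕ) (s : S),
      vval M γ (detPolicy (πseq k)) s ≤ vval M γ (detPolicy (πseq (k + 1))) s :=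
    fun k s => improve M hγ0 hγ1 (πseq k) (πseq (k + 1)) (hgreedy k) s
  refine ⟨hmono, ?_⟩
  have hmono' : ∀ k m : ℕ, k ≤ m → ∀ s : S,
      vval M γ (detPolicy (πseq k)) s ≤ vval M γ (detPolicy (πseq m)) s := by
    intro k m hkm
    induction hkm with
    | refl => intro s; exact le_rfl
    | step h ih => intro s; exact le_trans (ih s) (hmono _ s)
  have key : ∀ k m : ℕ, k < m → πseq k = πseq m →
      ∃ k : ℕ, ∀ s : S, vval M γ (detPolicy (πseq k)) s = vStar M γ s := by
    intro k m hkm heq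
    have hVkm : ∀ s : S, vval M γ (detPolicy (πseq k)) s = vval M γ (detPolicy (πseq m)) s :=
      fun s => by rw [heq]
    have hv : ∀ s : S, vval M γ (detPolicy (πseq k)) s = vval M γ (detPolicy (πseq (k + 1))) s := by
      intro s
      refine le_antisymm (hmono k s) ?_
      calc vval M γ (detPolicy (πseq (k + 1))) s
          ≤ vval M γ (detPolicy (πseq m)) s := hmono' (k + 1) m hkm s
        _ = vval M γ (detPolicy (πseq k)) s := (hVkm s).symm
    refine ⟨k, fun s => ?_⟩
    have hub : ∀ π : Policy S A, vval M γ π s ≤ vval M γ (detPolicy (πseq k)) s :=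
      fun π => optimal_of_stable M hγ0 hγ1 (πseq k) (πseq (k + 1)) (hgreedy k) hv π s
    have hbdd : BddAbove (Set.range fun π : Policy S A => vval M γ π s) := by
      refine ⟨vval M γ (detPolicy (πseq k)) s, ?_⟩
      rintro x ⟨π, rfl⟩
      exact hub π
    refine le_antisymm (le_ciSup hbdd (detPolicy (πseq k))) (ciSup_le hub)
  obtain ⟨k, m, hne, heq⟩ := Finite.exists_ne_map_eq_of_infinite πseq
  rcases hne.lt_or_gt with h | h
  · exact key k m h heq
  · exact key m k h heq.symm
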